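/- Let φ : Δ^{0̂} → Δ be a group epimorphism. For every conjugate h in Δ of R₀, R₁ or R₂, there exists a conjugate g in Δ^{0̂} of one of R₁, R₂, R₁^{R₀}, R₂^{R₀} with gφ = h. -/

import Mathlib

/-!
An involution of a free product is trivial or conjugate into a factor: if the first and last
letters of its reduced word lie in different factors, the square of that word is again reduced,
hence nontrivial; otherwise conjugating by the last letter shortens the word. Since
`Δ ≅ ⟨R₀⟩ * ⟨R₁⟩ * ⟨R₂⟩`, every involution of `Δ` is `1` or a conjugate of some `Rₖ`.

The four generators of `Δ^{0̂}` are involutions, so `φ` sends each of them to `1` or to a conjugate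
of some `Rₘ`. If none went to a conjugate of `Rₖ`, the character of `Δ` with kernel `Δ^{k̂}`
(`Rₖ ↦ -1`, the other generators `↦ 1`) would vanish on `im φ = Δ`. So some generator `s` has
`sφ = d⁻¹ Rₖ d`, and for `h = c⁻¹ Rₖ c` any `e` with `eφ = d⁻¹ c` gives `(e⁻¹ s e)φ = h`.
-/

/-- The relations making each generator an involution. -/
def rels : Set (FreeGroup (Fin 3)) := {x | ∃ i, x = (FreeGroup.of i) ^ 2}

/-- Δ = C₂ * C₂ * C₂. -/
abbrev Δ := PresentedGroup rels

/-- The generators R₀, R₁, R₂ of Δ. -/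
def R (i : Fin 3) : Δ := PresentedGroup.of i

/-- Δ^{0̂}, the normal closure of {R₁, R₂}, an index-2 subgroup of Δ. -/
def Δ0 : Subgroup Δ := Subgroup.normalClosure {R 1, R 2}

/-- Δ⁺, the even-word subgroup of Δ. -/
def Δplus : Subgroup Δ := Subgroup.closure {R 1 * R 2, R 2 * R 0, R 0 * R 1}

/-- The preimage H φ⁻¹, regarded as a subgroup of Δ. -/
def preim (φ : Δ0 →* Δ) (H : Subgroup Δ) : Subgroup Δ :=
  (H.comap φ).map Δ0.subtype

/-- The kernel of φ, regarded as a subgroup of Δ. -/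
def kerS (φ : Δ0 →* Δ) : Subgroup Δ := φ.ker.map Δ0.subtype

/-- The conjugate K^g = g⁻¹ K g. -/
def conjS (K : Subgroup Δ) (g : Δ) : Subgroup Δ :=
  K.map (MulAut.conj g⁻¹).toMonoidHom

/-- The four involutions R₁, R₂, R₁^{R₀}, R₂^{R₀} generating Δ^{0̂}. -/
def gens : Set Δ := {R 1, R 2, (R 0)⁻¹ * R 1 * R 0, (R 0)⁻¹ * R 2 * R 0}

theorem eq_one_or_eq_of_mem_zpowers {G : Type*} [Group G] {g x : G} (hg : g * g = 1)
    (hx : x ∈ Subgroup.zpowers g) : x = 1 ∨ x = g := by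
  obtain ⟨n, rfl⟩ := hx
  have hg2 : g ^ (2 : ℤ) = 1 := by rw [zpow_two, hg]
  rcases Int.even_or_odd' n with ⟨m, rfl | rfl⟩
  · left
    simp [zpow_mul, hg2]
  · right
    simp [zpow_add, zpow_mul, hg2]

namespace Monoid.CoprodI

variable {ι : Type*} {M : ι → Type*} [∀ i, Monoid (M i)] [∀ i, DecidableEq (M i)]

namespace Word

theorem length_rcons_le {i : ι} (p : Pair M i) :
    (rcons p).toList.length ≤ p.tail.toList.length + 1 := by
  unfold rcons; split <;> simp

theorem length_tail_le_length_rcons {i : ι} (p : Pair M i) :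
    p.tail.toList.length ≤ (rcons p).toList.length := by
  unfold rcons; split <;> simp

variable [DecidableEq ι]

theorem length_of_smul_le {i : ι} (m : M i) (w : Word M) :
    (of m • w).toList.length ≤ w.toList.length + 1 := by
  have htail := length_tail_le_length_rcons (equivPair i w)
  rw [← equivPair_symm, Equiv.symm_apply_apply] at htail
  rw [of_smul_def]
  exact (length_rcons_le _).trans (by simpa using htail)

theorem length_listProd_smul_le (L : List (Σ i, M i)) (w : Word M) :
    ((L.map fun l => of l.2).prod • w).toList.length ≤ w.toList.length + L.length := by
  induction L with
  | nil => simp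
  | cons a L ih =>
    rw [List.map_cons, List.prod_cons, mul_smul, List.length_cons]
    exact (length_of_smul_le _ _).trans (by omega)

end Word

variable [DecidableEq ι]

theorem NeWord.prod_ne_one {i j : ι} (w : NeWord M i j) : w.prod ≠ 1 := by
  intro h
  have : w.toWord = Word.empty := Word.equiv.symm.injective <| h.trans Word.prod_empty.symm
  exact w.toList_ne_nil (congrArg Word.toList this)

theorem Word.prod_mul_self_ne_one {w : Word M} {a b : Σ i, M i} {l : List (Σ i, M i)}
    (hw : w.toList = a :: (l ++ [b])) (hab : a.1 ≠ b.1) : w.prod * w.prod ≠ 1 := by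
  obtain ⟨i, j, w, rfl⟩ := NeWord.of_word w (by rintro rfl; simp at hw)
  replace hw : w.toList = a :: (l ++ [b]) := hw
  obtain rfl : a = ⟨i, w.head⟩ := by simpa [hw] using w.toList_head?
  obtain rfl : b = ⟨j, w.last⟩ := by
    simpa [hw, List.getLast?_cons, List.getLast?_append] using w.toList_getLast?
  rw [show w.toWord.prod = w.prod from rfl, ← NeWord.append_prod (hne := Ne.symm hab)]
  exact NeWord.prod_ne_one _

section Group

variable {G : ι → Type*} [∀ i, Group (G i)] [∀ i, DecidableEq (G i)]

theorem length_equiv_conj_lt {x : CoprodI G} {i : ι} {a b : G i} {l : List (Σ i, G i)}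
    (hx : (Word.equiv x).toList = ⟨i, a⟩ :: (l ++ [⟨i, b⟩])) :
    (Word.equiv (of b * x * (of b)⁻¹)).toList.length < (Word.equiv x).toList.length := by
  have hprod : x = of a * (l.map fun l => of l.2).prod * of b := by
    have h : (Word.equiv x).prod = x := Word.equiv.symm_apply_apply x
    rw [Word.prod, hx] at h
    simpa [mul_assoc] using h.symm
  have hconj : of b * x * (of b)⁻¹ = ((⟨i, b * a⟩ :: l).map fun l => of l.2).prod := by
    simp [hprod, mul_assoc]
  rw [hconj, hx]
  have := Word.length_listProd_smul_le (⟨i, b * a⟩ :: l) Word.empty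
  simp only [Word.empty_toList, List.length_nil, zero_add] at this
  simp only [List.length_cons, List.length_append] at this ⊢
  exact this.trans_lt (by simp)

theorem eq_one_or_conj_of_mul_self_eq_one (x : CoprodI G) (hx : x * x = 1) :
    x = 1 ∨ ∃ i, ∃ g : G i, ∃ c, x = c⁻¹ * of g * c := by
  induction hn : (Word.equiv x).toList.length using Nat.strong_induction_on generalizing x with
  | _ n ih =>
  have hprod : (Word.equiv x).prod = x := Word.equiv.symm_apply_apply x
  rcases hL : (Word.equiv x).toList with _ | ⟨⟨i, a⟩, L⟩
  · left
    simpa [Word.prod, hL] using hprod.symm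
  rcases List.eq_nil_or_concat L with rfl | ⟨l, ⟨j, b⟩, rfl⟩
  · right
    exact ⟨i, a, 1, by simpa [Word.prod, hL] using hprod.symm⟩
  rw [List.concat_eq_append] at hL
  by_cases hij : i = j
  · subst hij
    set z := of b * x * (of b)⁻¹
    have hz : z * z = 1 := by
      rw [show z * z = of b * (x * x) * (of b)⁻¹ by simp only [z]; group, hx]
      group
    have hxz : x = (of b)⁻¹ * z * of b := by simp only [z]; group
    rcases ih _ (hn ▸ length_equiv_conj_lt hL) z hz rfl with h | ⟨k, g, c, hc⟩
    · left
      simp [hxz, h]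
    · right
      exact ⟨k, g, c * of b, by rw [hxz, hc]; group⟩
  · have hne := Word.prod_mul_self_ne_one hL hij
    rw [hprod] at hne
    exact absurd hx hne

end Group

end Monoid.CoprodI

@[simp]
theorem R_mul_self (i : Fin 3) : R i * R i = 1 := by
  rw [← pow_two, R, PresentedGroup.of, ← map_pow]
  exact PresentedGroup.one_of_mem ⟨i, rfl⟩

theorem R_inv (i : Fin 3) : (R i)⁻¹ = R i :=
  inv_eq_of_mul_eq_one_right (R_mul_self i)

@[simp]
theorem R_mul_R_mul (i : Fin 3) (a : Δ) : R i * (R i * a) = a := by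
  rw [← mul_assoc, R_mul_self, one_mul]

open Monoid CoprodI Subgroup

noncomputable section

def toCoprodZPowers : Δ →* CoprodI fun i => zpowers (R i) :=
  PresentedGroup.toGroup (f := fun i => of ⟨R i, mem_zpowers (R i)⟩) <| by
    rintro _ ⟨i, rfl⟩
    rw [map_pow, FreeGroup.lift_apply_of, ← map_pow, pow_two]
    have : (⟨R i, mem_zpowers (R i)⟩ * ⟨R i, mem_zpowers (R i)⟩ : zpowers (R i)) = 1 :=
      Subtype.ext (R_mul_self i)
    rw [this, map_one]

def ofCoprodZPowers : (CoprodI fun i => zpowers (R i)) →* Δ :=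
  CoprodI.lift fun i => (zpowers (R i)).subtype

theorem ofCoprodZPowers_toCoprodZPowers (x : Δ) : ofCoprodZPowers (toCoprodZPowers x) = x := by
  suffices ofCoprodZPowers.comp toCoprodZPowers = MonoidHom.id Δ from DFunLike.congr_fun this x
  refine PresentedGroup.ext fun i => ?_
  rw [MonoidHom.comp_apply, toCoprodZPowers, PresentedGroup.toGroup.of, ofCoprodZPowers, lift_of]
  rfl

theorem eq_one_or_conj_R_of_mul_self_eq_one {x : Δ} (hx : x * x = 1) :
    x = 1 ∨ ∃ k c, x = c⁻¹ * R k * c := by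
  classical
  have hx' : toCoprodZPowers x * toCoprodZPowers x = 1 := by rw [← map_mul, hx, map_one]
  rw [← ofCoprodZPowers_toCoprodZPowers x]
  rcases eq_one_or_conj_of_mul_self_eq_one _ hx' with h | ⟨k, ⟨g, hg⟩, c, hc⟩
  · exact .inl (by rw [h, map_one])
  rcases eq_one_or_eq_of_mem_zpowers (R_mul_self k) hg with rfl | rfl
  · left
    simp [hc, ofCoprodZPowers]
  · right
    exact ⟨k, ofCoprodZPowers c, by simp [hc, ofCoprodZPowers]⟩

end

def signChar (k : Fin 3) : Δ →* ℤˣ :=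
  PresentedGroup.toGroup (f := fun i => if i = k then -1 else 1) <| by
    rintro _ ⟨i, rfl⟩
    rw [map_pow, FreeGroup.lift_apply_of, Int.units_sq]

theorem signChar_R (k i : Fin 3) : signChar k (R i) = if i = k then -1 else 1 :=
  PresentedGroup.toGroup.of _

theorem signChar_eq_one_of_mul_self_eq_one {k : Fin 3} {x : Δ} (hx : x * x = 1)
    (hk : ∀ c, x ≠ c⁻¹ * R k * c) : signChar k x = 1 := by
  rcases eq_one_or_conj_R_of_mul_self_eq_one hx with rfl | ⟨i, c, rfl⟩
  · exact map_one _
  · have hik : i ≠ k := by rintro rfl; exact hk c rfl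
    simp [signChar_R, hik]

theorem gens_subset_Δ0 : gens ⊆ Δ0 := by
  have h1 : R 1 ∈ Δ0 := subset_normalClosure (by simp)
  have h2 : R 2 ∈ Δ0 := subset_normalClosure (by simp)
  have hΔ0 : Δ0.Normal := normalClosure_normal
  rintro _ (rfl | rfl | rfl | rfl)
  · exact h1
  · exact h2
  · simpa using hΔ0.conj_mem _ h1 (R 0)⁻¹
  · simpa using hΔ0.conj_mem _ h2 (R 0)⁻¹

theorem mul_self_eq_one_of_mem_gens {s : Δ} (hs : s ∈ gens) : s * s = 1 := by
  rcases hs with rfl | rfl | rfl | rfl <;> simp [R_inv, mul_assoc]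

theorem closure_gens_normal : (closure gens).Normal := by
  rw [← normalizer_eq_top_iff, eq_top_iff, ← PresentedGroup.closure_range_of rels, closure_le]
  rintro _ ⟨i, rfl⟩
  show R i ∈ normalizer (closure gens : Set Δ)
  rw [← zpowers_le, le_normalizer_closure_iff]
  intro h hh s hs
  rcases eq_one_or_eq_of_mem_zpowers (R_mul_self i) hh with rfl | rfl
  · simpa using Subgroup.subset_closure hs
  have hconj {t : Δ} (ht : t ∈ gens) : t * s * t⁻¹ ∈ closure gens :=
    mul_mem (mul_mem (Subgroup.subset_closure ht) (Subgroup.subset_closure hs))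
      (inv_mem (Subgroup.subset_closure ht))
  fin_cases i
  · apply Subgroup.subset_closure
    rcases hs with rfl | rfl | rfl | rfl <;> simp [gens, R_inv, mul_assoc]
  · exact hconj (by simp [gens])
  · exact hconj (by simp [gens])

theorem closure_gens : closure gens = Δ0 := by
  have := closure_gens_normal
  refine le_antisymm ((closure_le _).mpr gens_subset_Δ0) (normalClosure_le_normal ?_)
  simp only [Set.insert_subset_iff, Set.singleton_subset_iff, SetLike.mem_coe]
  exact ⟨Subgroup.subset_closure (by simp [gens]), Subgroup.subset_closure (by simp [gens])⟩

theorem closure_preimage_gens : closure (Δ0.subtype ⁻¹' gens) = ⊤ :=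
  closure_gens ▸ closure_preimage_eq_top gens

theorem exists_gens_map_eq_conj_R (φ : Δ0 →* Δ) (hφ : Function.Surjective φ) (k : Fin 3) :
    ∃ g : Δ0, (g : Δ) ∈ gens ∧ ∃ d, φ g = d⁻¹ * R k * d := by
  by_contra! h
  have htriv : (signChar k).comp φ = 1 := by
    refine MonoidHom.eq_of_eqOn_dense closure_preimage_gens fun g hg => ?_
    have hgg : g * g = 1 := Subtype.ext (mul_self_eq_one_of_mem_gens hg)
    exact signChar_eq_one_of_mul_self_eq_one (by rw [← map_mul, hgg, map_one]) (h g hg)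
  obtain ⟨y, hy⟩ := hφ (R k)
  have := DFunLike.congr_fun htriv y
  simp [hy, signChar_R] at this

theorem stmt11 (φ : Δ0 →* Δ) (hφ : Function.Surjective φ)
    (h : Δ) (hh : ∃ i : Fin 3, ∃ c : Δ, h = c⁻¹ * R i * c) :
    ∃ g : Δ0, (∃ s ∈ gens, ∃ c ∈ Δ0, (g : Δ) = c⁻¹ * s * c) ∧ φ g = h := by
  obtain ⟨k, c, rfl⟩ := hh
  obtain ⟨s, hs, d, hd⟩ := exists_gens_map_eq_conj_R φ hφ k
  obtain ⟨e, he⟩ := hφ (d⁻¹ * c)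
  refine ⟨e⁻¹ * s * e, ⟨s, hs, e, e.2, by simp⟩, ?_⟩
  rw [map_mul, map_mul, map_inv, he, hd]
  group
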